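/- arXiv:2106.08544 — 2 statements merged into one kernel-verified Lean document; each statement's English description precedes it below -/
import Mathlib

section
/- Let B ∈ ℂ^{n×d} and let ℓ_i = B_i (B*B)† B_i* be the leverage score of the i-th row B_i of B, where † denotes the Moore–Penrose pseudoinverse. Then for every i with ℓ_i > 0, (1/ℓ_i) · B_i* B_i ⪯ B*B in the Loewner order of Hermitian PSD matrices. -/
open Matrix
open scoped ComplexOrder

/-!
Put `A = BᴴB` and `P = AM`. The Penrose conditions make `P` Hermitian with `PA = A`, hence
`(BP - B)ᴴ(BP - B) = 0`, i.e. `BP = B`. So `y = M B_iᴴ` solves `A y = B_iᴴ`, and then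
`ℓ_i = B_i y = yᴴ A y`. For `Q = 1 - ℓ_i⁻¹ y B_i` one checks `QᴴAQ = A - ℓ_i⁻¹ B_iᴴB_i`,
a congruence of the positive semidefinite matrix `A`.
-/

namespace Matrix

variable {m n R : Type*} [Fintype m] [Fintype n]

theorem IsHermitian.mul_eq_left_of_mul_conjTranspose_mul_self_eq [Ring R] [PartialOrder R]
    [StarRing R] [StarOrderedRing R] [NoZeroDivisors R] {P : Matrix n n R} (hP : P.IsHermitian)
    (B : Matrix m n R) (h : P * (Bᴴ * B) = Bᴴ * B) : B * P = B := by
  have h' : Bᴴ * B * P = Bᴴ * B := by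
    simpa [Matrix.mul_assoc, hP.eq] using congrArg (fun X => Xᴴ) h
  rw [← sub_eq_zero, ← conjTranspose_mul_self_eq_zero]
  simp only [conjTranspose_sub, conjTranspose_mul, hP.eq, Matrix.sub_mul, Matrix.mul_sub]
  rw [Matrix.mul_assoc P, ← Matrix.mul_assoc Bᴴ, h', ← Matrix.mul_assoc, sub_self]

theorem PosSemidef.sub_inv_smul_vecMulVec_of_mulVec_eq [Field R] [PartialOrder R] [StarRing R]
    [DecidableEq n] {A : Matrix n n R} (hA : A.PosSemidef) {v y : n → R} (hv : A *ᵥ y = v) :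
    (A - (star v ⬝ᵥ y)⁻¹ • vecMulVec v (star v)).PosSemidef := by
  set c := star v ⬝ᵥ y with hc_def
  have hyA : star y ᵥ* A = star v := by
    rw [← hv, star_mulVec, hA.isHermitian.eq]
  have hc : star c = c :=
    calc star c = star y ⬝ᵥ (A *ᵥ y) := by rw [hc_def, star_dotProduct, star_star, hv]
      _ = c := by rw [dotProduct_mulVec, hyA]
  rcases eq_or_ne c 0 with hc0 | hc0
  · simpa [hc0] using hA
  have hQ : A - c⁻¹ • vecMulVec v (star v) =
      (1 - c⁻¹ • vecMulVec y (star v))ᴴ * A * (1 - c⁻¹ • vecMulVec y (star v)) := by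
    simp only [conjTranspose_sub, conjTranspose_one, conjTranspose_smul, conjTranspose_vecMulVec,
      star_star, star_inv₀, hc, Matrix.sub_mul, Matrix.mul_sub, Matrix.one_mul, Matrix.mul_one,
      Matrix.smul_mul, Matrix.mul_smul, mul_vecMulVec, vecMulVec_mul, hyA, Matrix.sub_mulVec,
      Matrix.smul_mulVec, vecMulVec_mulVec, op_smul_eq_smul, hv, ← hc_def, smul_smul,
      inv_mul_cancel₀ hc0, one_smul, sub_self, zero_vecMulVec, smul_zero, sub_zero]
  rw [hQ]
  exact hA.conjTranspose_mul_mul_same _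

end Matrix

theorem leverage_score_rank_one_bound_general (n d : ℕ)
    (B : Matrix (Fin n) (Fin d) ℂ) (M : Matrix (Fin d) (Fin d) ℂ)
    (h1 : Bᴴ * B * M * (Bᴴ * B) = Bᴴ * B)
    (h3 : (Bᴴ * B * M)ᴴ = Bᴴ * B * M)
    (ℓ : Fin n → ℂ) (hℓ : ∀ i, ℓ i = B i ⬝ᵥ (M *ᵥ star (B i)))
    (i : Fin n) :
    (Bᴴ * B - (ℓ i)⁻¹ • vecMulVec (star (B i)) (B i)).PosSemidef := by
  have hP : (Bᴴ * B * M).IsHermitian := h3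
  have hBP : B * (Bᴴ * B * M) = B := hP.mul_eq_left_of_mul_conjTranspose_mul_self_eq B h1
  have hy : (Bᴴ * B) *ᵥ (M *ᵥ star (B i)) = star (B i) := by
    rw [mulVec_mulVec, ← hP.eq, ← star_vecMul, ← mul_apply_eq_vecMul, hBP]
  have := (posSemidef_conjTranspose_mul_self B).sub_inv_smul_vecMulVec_of_mulVec_eq hy
  rwa [star_star, ← hℓ i] at this

/-- If `M` is the Moore–Penrose pseudoinverse of `BᴴB` (characterized by the four Penrose
conditions) and `ℓ_i = B_i M B_iᴴ` is the leverage score of row `i`, then whenever `ℓ_i > 0`,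
`(1/ℓ_i) • B_iᴴ B_i ⪯ BᴴB` in the Loewner order. -/
theorem leverage_score_rank_one_bound (n d : ℕ)
    (B : Matrix (Fin n) (Fin d) ℂ) (M : Matrix (Fin d) (Fin d) ℂ)
    (h1 : Bᴴ * B * M * (Bᴴ * B) = Bᴴ * B)
    (h2 : M * (Bᴴ * B) * M = M)
    (h3 : (Bᴴ * B * M)ᴴ = Bᴴ * B * M)
    (h4 : (M * (Bᴴ * B))ᴴ = M * (Bᴴ * B))
    (ℓ : Fin n → ℂ) (hℓ : ∀ i, ℓ i = B i ⬝ᵥ (M *ᵥ star (B i)))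
    (i : Fin n)
    (hpos : 0 < (ℓ i).re)
    (hreal : (ℓ i).im = 0) :
    (Bᴴ * B - (ℓ i)⁻¹ • vecMulVec (star (B i)) (B i)).PosSemidef :=
  leverage_score_rank_one_bound_general n d B M h1 h3 ℓ hℓ i
end

section
/- There exist a diagonal matrix A = diag(a₁, a₂) with 1 = a₁ > a₂ > 0 and diagonal D = diag(d₁, d₂) with |d₁| = 1 < |d₂| such that the ratio ‖A‖·‖DA‖ / ‖D^{1/2}A‖² is at least any prescribed constant C > 1; concretely, taking a₂² = 1/|d₂| gives ‖D^{1/2}A‖² = 1 while ‖A‖·‖DA‖ = |d₂|^{1/2}. -/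
/-! Take `a₂ = 1/C` and `d₂ = C²`. Then `|d₂| a₂² = 1`, so `‖D^{1/2}A‖² = 1`, whereas
`|d₂| a₂ = C ≥ 1` dominates `‖DA‖` and `‖A‖ = 1`, so `‖A‖·‖DA‖ = C = |d₂|^{1/2}`. -/

section
variable {a d : ℝ}

theorem abs_eq_inv_sq_of_sq_eq_one_div_abs (h : a ^ 2 = 1 / |d|) :
    |d| = a⁻¹ ^ 2 := by
  rw [inv_pow, h, one_div, inv_inv]

theorem abs_mul_eq_inv_of_sq_eq_one_div_abs (ha : 0 < a) (h : a ^ 2 = 1 / |d|) :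
    |d| * a = a⁻¹ := by
  rw [abs_eq_inv_sq_of_sq_eq_one_div_abs h]
  field_simp

theorem abs_rpow_half_eq_inv_of_sq_eq_one_div_abs (ha : 0 < a) (h : a ^ 2 = 1 / |d|) :
    |d| ^ ((1 : ℝ) / 2) = a⁻¹ := by
  rw [abs_eq_inv_sq_of_sq_eq_one_div_abs h, ← Real.sqrt_eq_rpow,
    Real.sqrt_sq (inv_pos.2 ha).le]

theorem max_one_abs_mul_sq_eq_one (ha : 0 < a) (h : a ^ 2 = 1 / |d|) :
    max (|(1 : ℝ)| * 1 ^ 2) (|d| * a ^ 2) = 1 := by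
  rw [abs_eq_inv_sq_of_sq_eq_one_div_abs h, ← mul_pow, inv_mul_cancel₀ ha.ne']
  simp

theorem max_one_mul_max_one_abs_mul_eq_rpow_half (ha : 0 < a) (ha₁ : a ≤ 1)
    (h : a ^ 2 = 1 / |d|) :
    max 1 a * max (|(1 : ℝ)| * 1) (|d| * a) = |d| ^ ((1 : ℝ) / 2) := by
  rw [abs_rpow_half_eq_inv_of_sq_eq_one_div_abs ha h,
    abs_mul_eq_inv_of_sq_eq_one_div_abs ha h, max_eq_left ha₁, abs_one, mul_one,
    max_eq_right (one_le_inv₀ ha |>.2 ha₁), one_mul]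

end

/-- Sampling by `(A, DA)` scores can be arbitrarily worse than sampling by `D^{1/2}A`:
for any `C > 1` there are diagonal matrices `A = diag(1, a₂)` with `1 > a₂ > 0` and
`D = diag(1, d₂)` with `|d₂| > 1` and `a₂² = 1/|d₂|` such that
`‖D^{1/2}A‖² = max{|d₁|a₁², |d₂|a₂²} = 1` while
`‖A‖·‖DA‖ = max{a₁,a₂}·max{|d₁|a₁, |d₂|a₂} = |d₂|^{1/2}`, so the ratio is at least `C`. -/
theorem separate_sampling_arbitrarily_worse :
    ∀ C : ℝ, 1 < C → ∃ a₂ d₂ : ℝ, 0 < a₂ ∧ a₂ < 1 ∧ 1 < |d₂| ∧ a₂ ^ 2 = 1 / |d₂| ∧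
      max (|(1 : ℝ)| * 1 ^ 2) (|d₂| * a₂ ^ 2) = 1 ∧
      max 1 a₂ * max (|(1 : ℝ)| * 1) (|d₂| * a₂) = |d₂| ^ ((1 : ℝ) / 2) ∧
      C ≤ (max 1 a₂ * max (|(1 : ℝ)| * 1) (|d₂| * a₂)) /
            max (|(1 : ℝ)| * 1 ^ 2) (|d₂| * a₂ ^ 2) := by
  intro C hC
  have hC₀ : 0 < C := one_pos.trans hC
  have ha : 0 < C⁻¹ := inv_pos.2 hC₀
  have ha₁ : C⁻¹ < 1 := inv_lt_one_of_one_lt₀ hC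
  have hd : |C ^ 2| = C ^ 2 := abs_of_pos (pow_pos hC₀ 2)
  have h : C⁻¹ ^ 2 = 1 / |C ^ 2| := by rw [hd, inv_pow, one_div]
  refine ⟨C⁻¹, C ^ 2, ha, ha₁, by rw [hd]; exact one_lt_pow₀ hC two_ne_zero, h,
    max_one_abs_mul_sq_eq_one ha h, max_one_mul_max_one_abs_mul_eq_rpow_half ha ha₁.le h, ?_⟩
  rw [max_one_mul_max_one_abs_mul_eq_rpow_half ha ha₁.le h, max_one_abs_mul_sq_eq_one ha h,
    div_one, abs_rpow_half_eq_inv_of_sq_eq_one_div_abs ha h, inv_inv]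
end
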